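/- Let (A, R) be a Rota-Baxter algebra of weight zero and define ω₃(x,y,z) = x·R(R(y)·z), ω₄(x,y,z) = R(R(x)·y)·z, ω₅(x,y,z) = R(x·R(y))·z. Then for all v, w, x, y, z ∈ A one has ω₄(ω₃(v,w,x), y, z) + ω₄(ω₄(v,w,x), y, z) + ω₄(ω₅(v,w,x), y, z) = ω₄(v, ω₄(w,x,y), z). -/
import Mathlib


theorem STMT {A : Type*} [NonUnitalRing A] [Module ℚ A]
    [SMulCommClass ℚ A A] [IsScalarTower ℚ A A]
    (R : A →ₗ[ℚ] A)
    (hR : ∀ x y : A, R x * R y = R (R x * y) + R (x * R y)) :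
    ∀ v w x y z : A,
      (fun x y z : A => R (R x * y) * z) ((fun x y z : A => x * R (R y * z)) v w x) y z + (fun x y z : A => R (R x * y) * z) ((fun x y z : A => R (R x * y) * z) v w x) y z + (fun x y z : A => R (R x * y) * z) ((fun x y z : A => R (x * R y) * z) v w x) y z = (fun x y z : A => R (R x * y) * z) v ((fun x y z : A => R (R x * y) * z) w x y) z := by
  intro v w x y z
  simp only
  have key : R (v * R (R w * x)) + R (R (R v * w) * x) + R (R (v * R w) * x)
      = R v * R (R w * x) := by
    rw [add_assoc, ← map_add, ← add_mul, ← hR v w, mul_assoc, hR v (R w * x), add_comm]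
  rw [← add_mul, ← add_mul, ← map_add, ← map_add, ← add_mul, ← add_mul, key, ← mul_assoc]
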